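/- arXiv:1309.7669 — 5 statements merged into one kernel-verified Lean document; each statement's English description precedes it below -/
import Mathlib

section
/- Let z₁,…,z_m ∈ ℂⁿ and define the linear map A on n×n Hermitian matrices by A(X) = (zᵢ*Xzᵢ)_{i=1}^m ∈ ℝ^m. Let P = e₁e₁*, and for Hermitian X set X_T = PX + XP − PXP and X_{T⊥} = (I−P)X(I−P). Suppose that for some 0 < δ ≤ 3/13: (1) for every Hermitian positive semidefinite X, m⁻¹·Σᵢ|zᵢ*Xzᵢ| ≤ (1+δ)·Tr(X); (2) for every Hermitian X with X = X_T, m⁻¹·Σᵢ|zᵢ*Xzᵢ| ≥ 2(√2−1)(1−δ)·‖X‖_op. Suppose further there exist real numbers λ₁,…,λ_m such that Y := Σᵢ λᵢ zᵢzᵢ* satisfies ‖Y_T − e₁e₁*‖_F ≤ 1/5 and Y_{T⊥} is negative definite on the orthogonal complement of e₁ (i.e., y*Yy < 0 for every nonzero y ∈ ℂⁿ with y ⊥ e₁). Then e₁e₁* is the unique minimizer of: minimize Tr(X) over Hermitian positive semidefinite X subject to zᵢ*Xzᵢ = |⟨zᵢ, e₁⟩|² for all i. -/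
open Matrix Finset
open scoped ComplexOrder

/-- Frobenius norm of a complex matrix. -/
noncomputable def frobNorm {n : ℕ} (X : Matrix (Fin n) (Fin n) ℂ) : ℝ :=
  Real.sqrt (∑ a, ∑ b, ‖X a b‖ ^ 2)

/-- Operator (spectral) norm of a complex matrix, viewed as acting `ℓ² → ℓ²`. -/
noncomputable def opNorm {n : ℕ} (X : Matrix (Fin n) (Fin n) ℂ) : ℝ :=
  ‖LinearMap.toContinuousLinearMap (Matrix.toEuclideanLin X)‖

/-!
Write a competitor as `X = P + H` and split `H = H_T + H_⊥` with `H_⊥ = (1 - P) X (1 - P) ⪰ 0`.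
Feasibility means `A(H) = 0`, so `Tr (Y H) = 0` for the certificate `Y = A*(λ)`, which rearranges
to `Tr H = Tr H_⊥ - Tr ((Y_T - P) H_T) - Tr (Y H_⊥)`. The last term is `≤ 0` because `Y` is negative
on `e₁^⊥` and `H_⊥` lives there; the middle one is at most `‖H_T‖_F / 5` by Cauchy–Schwarz.
Since `A(H_T) = -A(H_⊥)`, conditions (2) and (1) give `2(√2-1)(1-δ)‖H_T‖_op ≤ (1+δ) Tr H_⊥`, and
`‖H_T‖_F ≤ √2 ‖H_T‖_op` because `H_T` is supported on the first row and column. For `δ ≤ 3/13`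
this yields `‖H_T‖_F < 5 Tr H_⊥`, hence `Tr H > 0` unless `H = 0`.
-/

def tangentPart {R : Type*} [Ring R] (P X : R) : R := P * X + X * P - P * X * P

section Ring

variable {R : Type*} [Ring R] {P : R}

lemma mul_tangentPart (hP : P * P = P) (X : R) : P * tangentPart P X = P * X := by
  simp only [tangentPart, mul_add, mul_sub, ← mul_assoc, hP]
  abel

lemma tangentPart_mul (hP : P * P = P) (X : R) : tangentPart P X * P = X * P := by
  simp only [tangentPart, add_mul, sub_mul, mul_assoc, hP]
  abel

lemma tangentPart_tangentPart (hP : P * P = P) (X : R) :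
    tangentPart P (tangentPart P X) = tangentPart P X := by
  rw [tangentPart, mul_tangentPart hP, tangentPart_mul hP]
  rfl

lemma sub_tangentPart_sub_self (hP : P * P = P) (X : R) :
    X - P - tangentPart P (X - P) = (1 - P) * X * (1 - P) := by
  simp only [tangentPart, mul_sub, sub_mul, one_mul, mul_one, mul_assoc, hP]
  abel

lemma IsSelfAdjoint.tangentPart [StarRing R] {X : R} (hP : IsSelfAdjoint P)
    (hX : IsSelfAdjoint X) : IsSelfAdjoint (tangentPart P X) := by
  simp only [IsSelfAdjoint, _root_.tangentPart, star_sub, star_add, star_mul, hP.star_eq,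
    hX.star_eq, mul_assoc]
  abel

end Ring

section MatrixRing

variable {ι R : Type*} [Fintype ι] [DecidableEq ι] [CommRing R]

lemma trace_tangentPart {P : Matrix ι ι R} (hP : P * P = P) (X : Matrix ι ι R) :
    (tangentPart P X).trace = (P * X).trace := by
  rw [tangentPart, trace_sub, trace_add, trace_mul_comm X P, trace_mul_comm (P * X) P,
    ← mul_assoc, hP]
  ring

lemma trace_mul_tangentPart (P Y X : Matrix ι ι R) :
    (Y * tangentPart P X).trace = (tangentPart P Y * X).trace := by
  simp only [tangentPart, mul_add, mul_sub, add_mul, sub_mul, trace_add, trace_sub, ← mul_assoc]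
  rw [trace_mul_cycle Y X P, trace_mul_comm (Y * P * X) P]
  simp only [← mul_assoc]
  abel

lemma trace_eq_of_trace_mul_eq_zero {P Y X : Matrix ι ι R} (hP : P * P = P)
    (hYX : (Y * X).trace = 0) :
    X.trace = (X - tangentPart P X).trace - ((tangentPart P Y - P) * tangentPart P X).trace
      - (Y * (X - tangentPart P X)).trace := by
  have hYT := trace_mul_tangentPart P Y (tangentPart P X)
  rw [tangentPart_tangentPart hP] at hYT
  have hPT : (P * tangentPart P X).trace = (tangentPart P X).trace := by
    rw [mul_tangentPart hP, trace_tangentPart hP]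
  simp only [mul_sub, sub_mul, trace_sub] at hYX ⊢
  linear_combination hYX - hYT - hPT

omit [DecidableEq ι] in
lemma trace_vecMulVec_mul (x y : ι → R) (X : Matrix ι ι R) :
    (vecMulVec x y * X).trace = y ⬝ᵥ X *ᵥ x := by
  rw [vecMulVec_mul, trace_vecMulVec, dotProduct_comm, dotProduct_mulVec]

lemma trace_sum_smul_vecMulVec_mul_eq_zero {κ : Type*} [Fintype κ] (c : κ → R)
    (x y : κ → ι → R) {X : Matrix ι ι R} (hX : ∀ k, y k ⬝ᵥ X *ᵥ x k = 0) :
    ((∑ k, c k • vecMulVec (x k) (y k)) * X).trace = 0 := by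
  simp [Finset.sum_mul, trace_sum, trace_vecMulVec_mul, hX]

lemma tangentPart_vecMulVec_apply_eq_zero [StarRing R] (v : ι → R) (X : Matrix ι ι R) {a b : ι}
    (ha : v a = 0) (hb : v b = 0) :
    tangentPart (vecMulVec v (star v)) X a b = 0 := by
  simp [tangentPart, vecMulVec_mul, mul_vecMulVec, vecMulVec_apply, ha, hb]

lemma sub_tangentPart_mulVec_eq_zero {P : Matrix ι ι R} (hP : P * P = P) {v : ι → R}
    (hPv : P *ᵥ v = v) (X : Matrix ι ι R) : (X - P - tangentPart P (X - P)) *ᵥ v = 0 := by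
  rw [sub_tangentPart_sub_self hP, ← mulVec_mulVec, sub_mulVec, one_mulVec, hPv, sub_self,
    mulVec_zero]

end MatrixRing

section RankOne

variable {ι R : Type*} [Fintype ι] [CommSemiring R] [StarRing R] {v : ι → R}

lemma vecMulVec_star_mul_self (hv : star v ⬝ᵥ v = 1) :
    vecMulVec v (star v) * vecMulVec v (star v) = vecMulVec v (star v) := by
  rw [vecMulVec_mul_vecMulVec, hv, one_smul]

lemma vecMulVec_star_mulVec_self (hv : star v ⬝ᵥ v = 1) : vecMulVec v (star v) *ᵥ v = v := by
  rw [vecMulVec_mulVec, hv, MulOpposite.op_one, one_smul]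

end RankOne

section Complex

variable {ι : Type*} [Fintype ι]

lemma dotProduct_vecMulVec_star_mulVec (v z : ι → ℂ) :
    star z ⬝ᵥ vecMulVec v (star v) *ᵥ z = ((‖star z ⬝ᵥ v‖ : ℝ) : ℂ) ^ 2 := by
  rw [vecMulVec_mulVec, op_smul_eq_smul, dotProduct_smul, smul_eq_mul, star_dotProduct v z,
    mul_comm]
  exact Complex.mul_conj' _

lemma trace_mul_conjTranspose_mul_self (Y B : Matrix ι ι ℂ) :
    (Y * (Bᴴ * B)).trace = ∑ j, B j ⬝ᵥ Y *ᵥ star (B j) := by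
  rw [← mul_assoc, trace_mul_cycle]
  simp only [trace, diag_apply, mul_apply, dotProduct, mulVec, conjTranspose_apply,
    Pi.star_apply, Finset.sum_mul, Finset.mul_sum]
  refine Finset.sum_congr rfl fun j _ => Finset.sum_comm.trans ?_
  exact Finset.sum_congr rfl fun a _ => Finset.sum_congr rfl fun b _ => by ring

open scoped MatrixOrder in
lemma re_trace_mul_nonpos_of_mulVec_eq_zero {Y X : Matrix ι ι ℂ} {v : ι → ℂ}
    (hX : X.PosSemidef) (hXv : X *ᵥ v = 0)
    (hY : ∀ y, star y ⬝ᵥ v = 0 → (star y ⬝ᵥ Y *ᵥ y).re ≤ 0) : ((Y * X).trace).re ≤ 0 := by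
  classical
  -- `X = Bᴴ B`; the columns `star (B j)` of `Bᴴ` are orthogonal to `v` since `B v = 0`.
  obtain ⟨B, rfl⟩ := CStarAlgebra.nonneg_iff_eq_star_mul_self.mp hX.nonneg
  have hBv : B *ᵥ v = 0 := by
    have h : v ∈ LinearMap.ker (Bᴴ * B).mulVecLin := hXv
    rwa [ker_mulVecLin_conjTranspose_mul_self] at h
  rw [star_eq_conjTranspose, trace_mul_conjTranspose_mul_self, Complex.re_sum]
  refine Finset.sum_nonpos fun j _ => ?_
  simpa using hY (star (B j)) (by simpa [mulVec] using congr_fun hBv j)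

lemma posSemidef_sub_tangentPart [DecidableEq ι] {P : Matrix ι ι ℂ} (hP : P * P = P)
    (hPh : P.IsHermitian) {X : Matrix ι ι ℂ} (hX : X.PosSemidef) :
    (X - P - tangentPart P (X - P)).PosSemidef := by
  have h1P : (1 - P)ᴴ = 1 - P := by rw [conjTranspose_sub, conjTranspose_one, hPh.eq]
  have h := hX.mul_mul_conjTranspose_same (1 - P)
  rw [h1P] at h
  rwa [sub_tangentPart_sub_self hP]

lemma Matrix.PosSemidef.re_trace_pos {A : Matrix ι ι ℂ} (hA : A.PosSemidef) (h : A ≠ 0) :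
    0 < (A.trace).re := by
  obtain ⟨hre, him⟩ := Complex.le_def.mp hA.trace_nonneg
  exact hre.lt_of_ne fun h0 => h (hA.trace_eq_zero_iff.mp (Complex.ext h0.symm him.symm))

end Complex

section Norms

variable {n : ℕ}

lemma abs_re_trace_mul_le (A B : Matrix (Fin n) (Fin n) ℂ) :
    |((A * B).trace).re| ≤ frobNorm A * frobNorm B := by
  have hre : ((A * B).trace).re = ∑ p : Fin n × Fin n, (A p.1 p.2 * B p.2 p.1).re := by
    simp only [trace, diag_apply, mul_apply, Complex.re_sum]
    exact (Fintype.sum_prod_type' _).symm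
  have hA : frobNorm A = √(∑ p : Fin n × Fin n, ‖A p.1 p.2‖ ^ 2) := by
    rw [frobNorm, Fintype.sum_prod_type' fun a b => ‖A a b‖ ^ 2]
  have hB : frobNorm B = √(∑ p : Fin n × Fin n, ‖B p.2 p.1‖ ^ 2) := by
    rw [frobNorm, Fintype.sum_prod_type' fun a b => ‖B b a‖ ^ 2, Finset.sum_comm]
  rw [hre, hA, hB]
  calc _ ≤ ∑ p : Fin n × Fin n, ‖A p.1 p.2‖ * ‖B p.2 p.1‖ :=
        (abs_sum_le_sum_abs _ _).trans <| sum_le_sum fun p _ =>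
          (Complex.abs_re_le_norm _).trans (norm_mul _ _).le
    _ ≤ _ := Real.sum_mul_le_sqrt_mul_sqrt _ _ _

lemma sum_norm_sq_apply_le_opNorm_sq (X : Matrix (Fin n) (Fin n) ℂ) (k : Fin n) :
    ∑ a, ‖X a k‖ ^ 2 ≤ opNorm X ^ 2 := by
  have h := (LinearMap.toContinuousLinearMap (toEuclideanLin X)).le_opNorm
    (EuclideanSpace.single k 1)
  rw [PiLp.norm_single, norm_one, mul_one] at h
  have h2 := pow_le_pow_left₀ (norm_nonneg _) h 2
  unfold opNorm
  simpa [EuclideanSpace.norm_sq_eq, mulVec_single_one] using h2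

lemma opNorm_eq_zero {X : Matrix (Fin n) (Fin n) ℂ} : opNorm X = 0 ↔ X = 0 := by
  simp [opNorm]

lemma frobNorm_le_sqrt_two_mul_opNorm {H : Matrix (Fin n) (Fin n) ℂ} (hH : H.IsHermitian)
    (k : Fin n) (hk : ∀ a b, a ≠ k → b ≠ k → H a b = 0) : frobNorm H ≤ √2 * opNorm H := by
  have hentry : ∀ a b, ‖H a b‖ ^ 2 ≤
      (if b = k then ‖H a b‖ ^ 2 else 0) + (if a = k then ‖H b a‖ ^ 2 else 0) := by
    intro a b
    by_cases hb : b = k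
    · by_cases ha : a = k <;> simp [hb, ha]
    · by_cases ha : a = k
      · simp [ha, hb, ← hH.apply k b]
      · simp [hk a b ha hb, hb, ha]
  have hsum : ∑ a, ∑ b, ‖H a b‖ ^ 2 ≤ 2 * ∑ a, ‖H a k‖ ^ 2 := by
    calc _ ≤ ∑ a, ∑ b, ((if b = k then ‖H a b‖ ^ 2 else 0) +
          (if a = k then ‖H b a‖ ^ 2 else 0)) :=
        sum_le_sum fun a _ => sum_le_sum fun b _ => hentry a b
      _ = 2 * ∑ a, ‖H a k‖ ^ 2 := by
        simp only [sum_add_distrib, sum_ite_eq', mem_univ, if_true, sum_ite_irrel, sum_const_zero]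
        ring
  have ho : 0 ≤ opNorm H := norm_nonneg _
  rw [frobNorm, ← Real.sqrt_sq ho, ← Real.sqrt_mul zero_le_two]
  exact Real.sqrt_le_sqrt (hsum.trans
    (mul_le_mul_of_nonneg_left (sum_norm_sq_apply_le_opNorm_sq H k) zero_le_two))

end Norms

lemma re_trace_ge_of_trace_mul_eq_zero {n : ℕ} {P Y H : Matrix (Fin n) (Fin n) ℂ}
    (hP : P * P = P) (hYH : (Y * H).trace = 0)
    (hneg : ((Y * (H - tangentPart P H)).trace).re ≤ 0) :
    ((H - tangentPart P H).trace).re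
      - frobNorm (tangentPart P Y - P) * frobNorm (tangentPart P H) ≤ (H.trace).re := by
  have h := congrArg Complex.re (trace_eq_of_trace_mul_eq_zero hP hYH)
  have hcs := (abs_le.mp (abs_re_trace_mul_le (tangentPart P Y - P) (tangentPart P H))).2
  simp only [Complex.sub_re] at h
  linarith

lemma two_mul_sqrt_two_sub_one_mul_pos {δ : ℝ} (hδ : δ < 1) : 0 < 2 * (√2 - 1) * (1 - δ) := by
  have := Real.one_lt_sqrt_two
  have : 0 < 1 - δ := by linarith
  positivity

lemma lt_five_mul_of_le_sqrt_two_mul {δ o t f : ℝ} (hδ : δ ≤ 3 / 13) (ht : 0 < t)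
    (hrip : 2 * (√2 - 1) * (1 - δ) * o ≤ (1 + δ) * t) (hf : f ≤ √2 * o) : f < 5 * t := by
  have hc := two_mul_sqrt_two_sub_one_mul_pos (δ := δ) (by linarith)
  have hs : 4 / 3 ≤ √2 := Real.le_sqrt_of_sq_le (by norm_num)
  have hconst : √2 * (1 + δ) < 5 * (2 * (√2 - 1) * (1 - δ)) := by nlinarith
  nlinarith [mul_le_mul_of_nonneg_left hf hc.le, mul_lt_mul_of_pos_right hconst ht]

lemma re_trace_pos_of_dual_certificate {n : ℕ} {δ : ℝ} (hδ : δ ≤ 3 / 13)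
    {P Y H : Matrix (Fin n) (Fin n) ℂ} (hP : P * P = P) (hH : H ≠ 0)
    (hperp : (H - tangentPart P H).PosSemidef) (hYH : (Y * H).trace = 0)
    (hneg : ((Y * (H - tangentPart P H)).trace).re ≤ 0)
    (hYT : frobNorm (tangentPart P Y - P) ≤ 1 / 5)
    (hfrob : frobNorm (tangentPart P H) ≤ √2 * opNorm (tangentPart P H))
    (hrip : 2 * (√2 - 1) * (1 - δ) * opNorm (tangentPart P H)
      ≤ (1 + δ) * ((H - tangentPart P H).trace).re) :
    0 < (H.trace).re := by
  have hc := two_mul_sqrt_two_sub_one_mul_pos (δ := δ) (by linarith)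
  have hperp0 : H - tangentPart P H ≠ 0 := fun h0 => hH <| by
    rw [h0, trace_zero, Complex.zero_re, mul_zero] at hrip
    have hT0 := opNorm_eq_zero.mp (le_antisymm (by nlinarith) (norm_nonneg _))
    rwa [hT0, sub_zero] at h0
  have hlt := lt_five_mul_of_le_sqrt_two_mul hδ (hperp.re_trace_pos hperp0) hrip hfrob
  have hcert := re_trace_ge_of_trace_mul_eq_zero hP hYH hneg
  have hfT : 0 ≤ frobNorm (tangentPart P H) := Real.sqrt_nonneg _
  nlinarith [mul_le_mul_of_nonneg_right hYT hfT]

theorem dual_certificate_implies_unique_minimizer_general (n m : ℕ) (hn : 0 < n)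
    (z : Fin m → (Fin n → ℂ)) (δ : ℝ) (hδ : δ ≤ 3 / 13)
    (e₁ : Fin n → ℂ) (he₁ : e₁ = fun j => if j = ⟨0, hn⟩ then 1 else 0)
    (P : Matrix (Fin n) (Fin n) ℂ) (hP : P = Matrix.vecMulVec e₁ (star e₁))
    -- (1): for all Hermitian psd `X`, `m⁻¹ Σᵢ |zᵢ*Xzᵢ| ≤ (1+δ)·Tr X`
    (h1 : ∀ X : Matrix (Fin n) (Fin n) ℂ, X.PosSemidef →
      (1 / (m : ℝ)) * ∑ i, ‖star (z i) ⬝ᵥ X.mulVec (z i)‖ ≤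
        (1 + δ) * (X.trace).re)
    -- (2): for all Hermitian `X` with `X = X_T`, `m⁻¹ Σᵢ |zᵢ*Xzᵢ| ≥ 2(√2−1)(1−δ)‖X‖_op`
    (h2 : ∀ X : Matrix (Fin n) (Fin n) ℂ, X.IsHermitian →
      X = P * X + X * P - P * X * P →
      2 * (Real.sqrt 2 - 1) * (1 - δ) * opNorm X ≤
        (1 / (m : ℝ)) * ∑ i, ‖star (z i) ⬝ᵥ X.mulVec (z i)‖)
    -- dual certificate `Y = Σᵢ λᵢ zᵢzᵢ*`
    (lam : Fin m → ℝ) (Y : Matrix (Fin n) (Fin n) ℂ)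
    (hY : Y = ∑ i, (lam i : ℂ) • Matrix.vecMulVec (z i) (star (z i)))
    (hYT : frobNorm (P * Y + Y * P - P * Y * P - Matrix.vecMulVec e₁ (star e₁)) ≤ 1 / 5)
    (hYTperp : ∀ y : Fin n → ℂ, y ≠ 0 → star y ⬝ᵥ e₁ = 0 →
      (star y ⬝ᵥ Y.mulVec y).re < 0) :
    -- conclusion: `e₁e₁*` is feasible and is the unique minimizer of the trace
    ((Matrix.vecMulVec e₁ (star e₁)).PosSemidef ∧
      ∀ i, star (z i) ⬝ᵥ (Matrix.vecMulVec e₁ (star e₁)).mulVec (z i) =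
        ((‖star (z i) ⬝ᵥ e₁‖ : ℝ) : ℂ) ^ 2) ∧
    ∀ X : Matrix (Fin n) (Fin n) ℂ, X.PosSemidef →
      (∀ i, star (z i) ⬝ᵥ X.mulVec (z i) =
        ((‖star (z i) ⬝ᵥ e₁‖ : ℝ) : ℂ) ^ 2) →
      X ≠ Matrix.vecMulVec e₁ (star e₁) →
      ((Matrix.vecMulVec e₁ (star e₁)).trace).re < (X.trace).re := by
  set k : Fin n := ⟨0, hn⟩
  obtain rfl : e₁ = Pi.single k 1 := by rw [he₁]; ext j; simp [Pi.single_apply]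
  have hv : star (Pi.single k 1) ⬝ᵥ Pi.single k (1 : ℂ) = 1 := by simp
  have hPP : P * P = P := hP ▸ vecMulVec_star_mul_self hv
  have hPh : P.IsHermitian := hP ▸ (posSemidef_vecMulVec_self_star _).isHermitian
  have hPfeas : ∀ i, star (z i) ⬝ᵥ P *ᵥ z i = ((‖star (z i) ⬝ᵥ Pi.single k 1‖ : ℝ) : ℂ) ^ 2 :=
    fun i => hP ▸ dotProduct_vecMulVec_star_mulVec _ (z i)
  rw [← hP] at hYT ⊢
  refine ⟨⟨hP ▸ posSemidef_vecMulVec_self_star _, hPfeas⟩, fun X hX hXfeas hXP => ?_⟩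
  set T := tangentPart P (X - P)
  have hAH : ∀ i, star (z i) ⬝ᵥ (X - P) *ᵥ z i = 0 := fun i => by
    rw [sub_mulVec, dotProduct_sub, hXfeas, hPfeas, sub_self]
  have hperp : (X - P - T).PosSemidef := posSemidef_sub_tangentPart hPP hPh hX
  have hT : T.IsHermitian := IsSelfAdjoint.tangentPart hPh (hX.isHermitian.sub hPh)
  have hAT : ∀ i, ‖star (z i) ⬝ᵥ T *ᵥ z i‖ = ‖star (z i) ⬝ᵥ (X - P - T) *ᵥ z i‖ := fun i => by
    rw [sub_mulVec (X - P), dotProduct_sub, hAH, zero_sub, norm_neg]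
  have hrip : 2 * (√2 - 1) * (1 - δ) * opNorm T ≤ (1 + δ) * ((X - P - T).trace).re := by
    have h := h2 T hT (tangentPart_tangentPart hPP _).symm
    simp only [hAT] at h
    exact h.trans (h1 _ hperp)
  have hfrob : frobNorm T ≤ √2 * opNorm T :=
    frobNorm_le_sqrt_two_mul_opNorm hT k fun a b ha hb => by
      simpa only [T, hP] using
        tangentPart_vecMulVec_apply_eq_zero _ (X - P) (by simp [ha]) (by simp [hb])
  have hpos := re_trace_pos_of_dual_certificate hδ hPP (sub_ne_zero.mpr hXP) hperp
    (hY ▸ trace_sum_smul_vecMulVec_mul_eq_zero _ _ _ hAH)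
    (re_trace_mul_nonpos_of_mulVec_eq_zero hperp
      (sub_tangentPart_mulVec_eq_zero hPP (hP ▸ vecMulVec_star_mulVec_self hv) X)
      fun y hy => (eq_or_ne y 0).elim (fun h => by simp [h]) fun h => (hYTperp y h hy).le)
    hYT hfrob hrip
  rw [trace_sub, Complex.sub_re] at hpos
  linarith

/-- the dual-certificate lemma. Under the RIP-1–type conditions (1), (2)
for `δ ∈ (0, 3/13]`, and existence of `Y = Σ λᵢ zᵢzᵢ*` with `‖Y_T − e₁e₁*‖_F ≤ 1/5` and
`Y` negative definite on `e₁^⊥`, the matrix `e₁e₁*` is the unique minimizer of the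
PhaseLift program with measurement vectors `z₁,…,z_m` and signal `e₁`. -/
theorem dual_certificate_implies_unique_minimizer (n m : ℕ) (hn : 0 < n) (hm : 0 < m)
    (z : Fin m → (Fin n → ℂ)) (δ : ℝ) (hδ0 : 0 < δ) (hδ : δ ≤ 3 / 13)
    (e₁ : Fin n → ℂ) (he₁ : e₁ = fun j => if j = ⟨0, hn⟩ then 1 else 0)
    (P : Matrix (Fin n) (Fin n) ℂ) (hP : P = Matrix.vecMulVec e₁ (star e₁))
    -- (1): for all Hermitian psd `X`, `m⁻¹ Σᵢ |zᵢ*Xzᵢ| ≤ (1+δ)·Tr X`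
    (h1 : ∀ X : Matrix (Fin n) (Fin n) ℂ, X.PosSemidef →
      (1 / (m : ℝ)) * ∑ i, ‖star (z i) ⬝ᵥ X.mulVec (z i)‖ ≤
        (1 + δ) * (X.trace).re)
    -- (2): for all Hermitian `X` with `X = X_T`, `m⁻¹ Σᵢ |zᵢ*Xzᵢ| ≥ 2(√2−1)(1−δ)‖X‖_op`
    (h2 : ∀ X : Matrix (Fin n) (Fin n) ℂ, X.IsHermitian →
      X = P * X + X * P - P * X * P →
      2 * (Real.sqrt 2 - 1) * (1 - δ) * opNorm X ≤
        (1 / (m : ℝ)) * ∑ i, ‖star (z i) ⬝ᵥ X.mulVec (z i)‖)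
    -- dual certificate `Y = Σᵢ λᵢ zᵢzᵢ*`
    (lam : Fin m → ℝ) (Y : Matrix (Fin n) (Fin n) ℂ)
    (hY : Y = ∑ i, (lam i : ℂ) • Matrix.vecMulVec (z i) (star (z i)))
    (hYT : frobNorm (P * Y + Y * P - P * Y * P - Matrix.vecMulVec e₁ (star e₁)) ≤ 1 / 5)
    (hYTperp : ∀ y : Fin n → ℂ, y ≠ 0 → star y ⬝ᵥ e₁ = 0 →
      (star y ⬝ᵥ Y.mulVec y).re < 0) :
    -- conclusion: `e₁e₁*` is feasible and is the unique minimizer of the trace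
    ((Matrix.vecMulVec e₁ (star e₁)).PosSemidef ∧
      ∀ i, star (z i) ⬝ᵥ (Matrix.vecMulVec e₁ (star e₁)).mulVec (z i) =
        ((‖star (z i) ⬝ᵥ e₁‖ : ℝ) : ℂ) ^ 2) ∧
    ∀ X : Matrix (Fin n) (Fin n) ℂ, X.PosSemidef →
      (∀ i, star (z i) ⬝ᵥ X.mulVec (z i) =
        ((‖star (z i) ⬝ᵥ e₁‖ : ℝ) : ℂ) ^ 2) →
      X ≠ Matrix.vecMulVec e₁ (star e₁) →
      ((Matrix.vecMulVec e₁ (star e₁)).trace).re < (X.trace).re :=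
  dual_certificate_implies_unique_minimizer_general n m hn z δ hδ e₁ he₁ P hP h1 h2 lam Y hY hYT
    hYTperp
end

section
/- For every integer n ≥ 3 and every λ ∈ [0,1]: ∫∫_{x₁ ≥ 0, x₂ ≥ 0, x₁+x₂ ≤ 1} |x₁ − λx₂|·(1 − x₁ − x₂)^{n−3} dx₁ dx₂ = (1/(n(n−1)(n−2)))·(1+λ²)/(1+λ). -/
/-!
Substituting `(x₁, x₂) = (s t, s (1 - t))`, i.e. `s = x₁ + x₂`, `t = x₁ / (x₁ + x₂)`, maps the
square `(0,1] × [0,1]` onto the triangle minus its vertex at the origin with Jacobian `s`, and turns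
the integrand, with `m = n - 3`, into `s² (1 - s)ᵐ · |t - λ (1 - t)|`. The integral therefore factorizes into
`∫₀¹ s² (1 - s)ᵐ ds = 2 / ((m + 1)(m + 2)(m + 3))` and
`∫₀¹ |(1 + λ) t - λ| dt = (1 + λ²) / (2 (1 + λ))`.
-/

open MeasureTheory Set

def unitTriangle : Set (ℝ × ℝ) := {p | 0 ≤ p.1 ∧ 0 ≤ p.2 ∧ p.1 + p.2 ≤ 1}

def triangleCoords (q : ℝ × ℝ) : ℝ × ℝ := (q.1 * q.2, q.1 * (1 - q.2))

def triangleCoordsDeriv (q : ℝ × ℝ) : ℝ × ℝ →L[ℝ] ℝ × ℝ :=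
  (q.2 • ContinuousLinearMap.fst ℝ ℝ ℝ + q.1 • ContinuousLinearMap.snd ℝ ℝ ℝ).prod
    ((1 - q.2) • ContinuousLinearMap.fst ℝ ℝ ℝ - q.1 • ContinuousLinearMap.snd ℝ ℝ ℝ)

lemma hasFDerivAt_triangleCoords (q : ℝ × ℝ) :
    HasFDerivAt triangleCoords (triangleCoordsDeriv q) q := by
  refine ((hasFDerivAt_fst.mul hasFDerivAt_snd).prodMk
    (hasFDerivAt_fst.mul ((hasFDerivAt_const 1 _).sub hasFDerivAt_snd))).congr_fderiv ?_
  ext <;> simp [triangleCoordsDeriv]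

lemma det_triangleCoordsDeriv (q : ℝ × ℝ) : (triangleCoordsDeriv q).det = -q.1 := by
  rw [ContinuousLinearMap.det, ← LinearMap.det_toMatrix (Module.Basis.finTwoProd ℝ),
    Matrix.det_fin_two]
  simp only [triangleCoordsDeriv, ContinuousLinearMap.coe_prod, ContinuousLinearMap.toLinearMap_add,
    ContinuousLinearMap.toLinearMap_smul, ContinuousLinearMap.coe_fst, ContinuousLinearMap.coe_snd,
    ContinuousLinearMap.toLinearMap_sub, LinearMap.toMatrix_apply, Module.Basis.finTwoProd_zero,
    LinearMap.prod_apply, Function.prod_apply, LinearMap.add_apply, LinearMap.smul_apply,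
    LinearMap.fst_apply, smul_eq_mul, mul_one, LinearMap.snd_apply, mul_zero, add_zero,
    LinearMap.sub_apply, sub_zero, Module.Basis.coe_finTwoProd_repr, Matrix.cons_val_zero,
    Module.Basis.finTwoProd_one, zero_add, zero_sub, Matrix.cons_val_one, Matrix.cons_val_fin_one]
  ring

lemma injOn_triangleCoords : InjOn triangleCoords (Ioc 0 1 ×ˢ Icc 0 1) := by
  rintro ⟨s, t⟩ ⟨hs, -⟩ ⟨s', t'⟩ - h
  simp only [triangleCoords, Prod.mk.injEq] at h
  obtain ⟨h₁, h₂⟩ := h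
  have hss' : s = s' := by linear_combination h₁ + h₂
  subst hss'
  exact Prod.ext rfl (mul_left_cancel₀ hs.1.ne' h₁)

lemma image_triangleCoords :
    triangleCoords '' (Ioc 0 1 ×ˢ Icc 0 1) = unitTriangle \ {0} := by
  ext ⟨x, y⟩
  simp only [mem_image, mem_prod, mem_Ioc, mem_Icc, triangleCoords, Prod.mk.injEq, Prod.exists,
    unitTriangle, mem_sdiff, mem_ofPred_eq, mem_singleton_iff, Prod.mk_eq_zero]
  constructor
  · rintro ⟨s, t, ⟨⟨hs0, hs1⟩, ht0, ht1⟩, rfl, rfl⟩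
    refine ⟨⟨by positivity, mul_nonneg hs0.le (by linarith), by linarith⟩, fun h => ?_⟩
    nlinarith [h.1, h.2]
  · rintro ⟨⟨hx, hy, hxy⟩, hne⟩
    have hpos : 0 < x + y := by
      by_contra! h
      exact hne ⟨by linarith, by linarith⟩
    refine ⟨x + y, x / (x + y), ⟨⟨hpos, hxy⟩, by positivity, ?_⟩, ?_, ?_⟩
    · rw [div_le_one hpos]; linarith
    · field_simp
    · field_simp; ring

theorem integral_unitTriangle {E : Type*} [NormedAddCommGroup E] [NormedSpace ℝ E]
    (g : ℝ × ℝ → E) :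
    ∫ p in unitTriangle, g p = ∫ q in Ioc 0 1 ×ˢ Icc 0 1, q.1 • g (triangleCoords q) := by
  have hnull : (volume : Measure (ℝ × ℝ)) {0} = 0 := measure_singleton 0
  rw [← setIntegral_congr_set (sdiff_null_ae_eq_self hnull), ← image_triangleCoords,
    integral_image_eq_integral_abs_det_fderiv_smul volume
      (measurableSet_Ioc.prod measurableSet_Icc)
      (fun q _ => (hasFDerivAt_triangleCoords q).hasFDerivWithinAt) injOn_triangleCoords]
  refine setIntegral_congr_fun (measurableSet_Ioc.prod measurableSet_Icc) fun q hq => ?_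
  rw [det_triangleCoordsDeriv, abs_neg, abs_of_pos hq.1.1]

lemma integral_abs_of_nonpos_of_nonneg {a b : ℝ} (ha : a ≤ 0) (hb : 0 ≤ b) :
    ∫ x in a..b, |x| = (a ^ 2 + b ^ 2) / 2 := by
  have hc : Continuous fun x : ℝ => |x| := continuous_abs
  rw [← intervalIntegral.integral_add_adjacent_intervals (hc.intervalIntegrable a 0)
      (hc.intervalIntegrable 0 b),
    intervalIntegral.integral_congr (g := fun x => -x) fun x hx => abs_of_nonpos ?_,
    intervalIntegral.integral_congr (g := fun x => x) fun x hx => abs_of_nonneg ?_,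
    intervalIntegral.integral_neg, integral_id, integral_id]
  · ring
  · exact (uIcc_of_le hb ▸ hx).1
  · exact (uIcc_of_le ha ▸ hx).2

lemma integral_abs_sub_mul_one_sub {lam : ℝ} (hlam : 0 ≤ lam) :
    ∫ t in (0 : ℝ)..1, |t - lam * (1 - t)| = (1 + lam ^ 2) / (2 * (1 + lam)) := by
  have hpos : 0 < 1 + lam := by linarith
  have h := intervalIntegral.integral_comp_mul_sub (fun x => |x|) hpos.ne' lam (a := 0) (b := 1)
  simp only [mul_zero, zero_sub, mul_one, add_sub_cancel_right] at h
  rw [integral_abs_of_nonpos_of_nonneg (by linarith) zero_le_one] at h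
  simp_rw [show ∀ t : ℝ, t - lam * (1 - t) = (1 + lam) * t - lam by intro t; ring, h, smul_eq_mul]
  field_simp
  ring

lemma integral_one_sub_pow (k : ℕ) : ∫ s in (0 : ℝ)..1, (1 - s) ^ k = 1 / (k + 1) := by
  simp [intervalIntegral.integral_comp_sub_left fun s => s ^ k]

lemma integral_sq_mul_one_sub_pow (m : ℕ) :
    ∫ s in (0 : ℝ)..1, s ^ 2 * (1 - s) ^ m = 2 / (((m : ℝ) + 1) * (m + 2) * (m + 3)) := by
  have hc : ∀ k : ℕ, IntervalIntegrable (fun s : ℝ => (1 - s) ^ k) volume 0 1 := fun k =>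
    (continuous_const.sub continuous_id).pow k |>.intervalIntegrable 0 1
  simp_rw [show ∀ s : ℝ, s ^ 2 * (1 - s) ^ m = (1 - s) ^ m - 2 * (1 - s) ^ (m + 1) + (1 - s) ^ (m + 2)
    by intro s; ring]
  rw [intervalIntegral.integral_add ((hc m).sub ((hc (m + 1)).const_mul 2)) (hc (m + 2)),
    intervalIntegral.integral_sub (hc m) ((hc (m + 1)).const_mul 2),
    intervalIntegral.integral_const_mul, integral_one_sub_pow, integral_one_sub_pow,
    integral_one_sub_pow]
  push_cast
  field_simp
  ring

theorem integral_unitTriangle_abs_sub_mul_pow (m : ℕ) {lam : ℝ} (hlam : 0 ≤ lam) :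
    ∫ p in unitTriangle, |p.1 - lam * p.2| * (1 - p.1 - p.2) ^ m =
      1 / (((m : ℝ) + 1) * ((m : ℝ) + 2) * ((m : ℝ) + 3)) * ((1 + lam ^ 2) / (1 + lam)) := by
  have hfactor : ∀ q ∈ Ioc (0 : ℝ) 1 ×ˢ Icc (0 : ℝ) 1,
      q.1 • (|(triangleCoords q).1 - lam * (triangleCoords q).2| *
        (1 - (triangleCoords q).1 - (triangleCoords q).2) ^ m) =
      q.1 ^ 2 * (1 - q.1) ^ m * |q.2 - lam * (1 - q.2)| := by
    rintro ⟨s, t⟩ ⟨hs, -⟩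
    simp only [triangleCoords, smul_eq_mul]
    rw [show s * t - lam * (s * (1 - t)) = s * (t - lam * (1 - t)) by ring, abs_mul,
      abs_of_pos hs.1]
    ring
  rw [integral_unitTriangle, setIntegral_congr_fun (measurableSet_Ioc.prod measurableSet_Icc)
      hfactor, Measure.volume_eq_prod,
    setIntegral_prod_mul (fun s => s ^ 2 * (1 - s) ^ m) (fun t => |t - lam * (1 - t)|),
    integral_Icc_eq_integral_Ioc,
    ← intervalIntegral.integral_of_le zero_le_one, ← intervalIntegral.integral_of_le zero_le_one,
    integral_sq_mul_one_sub_pow, integral_abs_sub_mul_one_sub hlam]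
  have hpos : (0 : ℝ) < 1 + lam := by linarith
  field_simp

/-- For every `n ≥ 3` and `λ ∈ [0,1]`,
`∫∫_{x₁,x₂ ≥ 0, x₁+x₂ ≤ 1} |x₁ − λx₂|·(1−x₁−x₂)^{n−3} dx₁dx₂
  = (1/(n(n−1)(n−2)))·(1+λ²)/(1+λ)`. -/
theorem simplex_integral_abs_diff (n : ℕ) (hn : 3 ≤ n) (lam : ℝ)
    (hlam : lam ∈ Set.Icc (0 : ℝ) 1) :
    ∫ p in {p : ℝ × ℝ | 0 ≤ p.1 ∧ 0 ≤ p.2 ∧ p.1 + p.2 ≤ 1},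
        |p.1 - lam * p.2| * (1 - p.1 - p.2) ^ (n - 3) =
      1 / ((n : ℝ) * ((n : ℝ) - 1) * ((n : ℝ) - 2)) * ((1 + lam ^ 2) / (1 + lam)) := by
  obtain ⟨m, rfl⟩ := Nat.exists_eq_add_of_le' hn
  rw [Nat.add_sub_cancel]
  exact (integral_unitTriangle_abs_sub_mul_pow m hlam.1).trans (by push_cast; ring)
end

section
/- Define t : ℂⁿ × ℂⁿ → ℂⁿ by t(x,y) = x − ⟨y,x⟩·y, where ⟨·,·⟩ is the standard Hermitian inner product. Then for all x₁, y₁, x₂, y₂ in the closed unit ball of ℂⁿ: ‖t(x₁,y₁) − t(x₂,y₂)‖₂ ≤ 2·(‖x₁ − x₂‖₂² + ‖y₁ − y₂‖₂²)^{1/2}. That is, t is 2-Lipschitz on the product of closed unit balls with respect to the Euclidean norm on ℂⁿ × ℂⁿ. -/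
/-!
Along the segment from `(x₂, y₂)` to `(x₁, y₁)`, which stays in the product of unit balls, the
mean value inequality reduces the claim to a bound on the derivative
`D(a, b) = a - (⟪y, a⟫ + ⟪b, x⟫) y - ⟪y, x⟫ b` at `(x, y)`. For `v = D(a, b)`, pairing `v` with
itself gives `‖v‖² ≤ ‖v - ⟪y, v⟫ y‖ ‖a‖ + (|⟪v, y⟫| + ‖v‖) ‖b‖`, and since
`‖v - ⟪y, v⟫ y‖² ≤ ‖v‖² - |⟪y, v⟫|²`, the coefficient vector has length at most `2 ‖v‖`;
Cauchy–Schwarz in `ℝ²` then yields `‖v‖ ≤ 2 √(‖a‖² + ‖b‖²)`.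
-/

open scoped InnerProductSpace
open Set

lemma le_mul_sqrt_sq_add_sq_of_sq_le {V p q α β c : ℝ} (hV : 0 ≤ V) (hc : 0 ≤ c)
    (hpq : p ^ 2 + q ^ 2 ≤ (c * V) ^ 2) (h : V ^ 2 ≤ p * α + q * β) :
    V ≤ c * Real.sqrt (α ^ 2 + β ^ 2) := by
  have hs_sq := Real.sq_sqrt (add_nonneg (sq_nonneg α) (sq_nonneg β))
  have cauchy_schwarz : (p * α + q * β) ^ 2 ≤ (p ^ 2 + q ^ 2) * (α ^ 2 + β ^ 2) := by
    nlinarith [sq_nonneg (p * β - q * α)]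
  have hV4 : (V ^ 2) ^ 2 ≤ (c * V * Real.sqrt (α ^ 2 + β ^ 2)) ^ 2 := by
    rw [mul_pow, hs_sq]
    calc (V ^ 2) ^ 2 ≤ (p * α + q * β) ^ 2 := pow_le_pow_left₀ (sq_nonneg V) h 2
      _ ≤ _ := cauchy_schwarz
      _ ≤ _ := mul_le_mul_of_nonneg_right hpq (by positivity)
  have hV2 : V * V ≤ c * Real.sqrt (α ^ 2 + β ^ 2) * V := by
    rw [← sq, mul_right_comm]
    exact (pow_le_pow_iff_left₀ (sq_nonneg V) (by positivity) two_ne_zero).1 hV4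
  rcases hV.eq_or_lt with rfl | hV
  · positivity
  · exact le_of_mul_le_mul_right hV2 hV

section InnerProduct

variable {𝕜 E : Type*} [RCLike 𝕜] [NormedAddCommGroup E] [InnerProductSpace 𝕜 E]

variable (𝕜) in
def gramSchmidtStep (x y : E) : E := x - ⟪y, x⟫_𝕜 • y

lemma norm_sub_inner_smul_sq_le {y : E} (hy : ‖y‖ ≤ 1) (v : E) :
    ‖v - ⟪y, v⟫_𝕜 • y‖ ^ 2 ≤ ‖v‖ ^ 2 - ‖⟪y, v⟫_𝕜‖ ^ 2 := by
  have hre : RCLike.re ⟪v, ⟪y, v⟫_𝕜 • y⟫_𝕜 = ‖⟪y, v⟫_𝕜‖ ^ 2 := by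
    rw [inner_smul_right, ← inner_conj_symm v y, RCLike.mul_conj, ← RCLike.ofReal_pow,
      RCLike.ofReal_re]
  have hy2 : ‖y‖ ^ 2 ≤ 1 := pow_le_one₀ (norm_nonneg y) hy
  rw [norm_sub_sq (𝕜 := 𝕜), hre, norm_smul, mul_pow]
  nlinarith [sq_nonneg ‖⟪y, v⟫_𝕜‖]

lemma norm_gramSchmidtStep_deriv_le {x y : E} (hx : ‖x‖ ≤ 1) (hy : ‖y‖ ≤ 1) (a b : E) :
    ‖a - (⟪y, a⟫_𝕜 + ⟪b, x⟫_𝕜) • y - ⟪y, x⟫_𝕜 • b‖ ≤ 2 * Real.sqrt (‖a‖ ^ 2 + ‖b‖ ^ 2) := by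
  set v := a - (⟪y, a⟫_𝕜 + ⟪b, x⟫_𝕜) • y - ⟪y, x⟫_𝕜 • b with hv
  clear_value v
  set T := ‖⟪v, y⟫_𝕜‖
  have hT : T ≤ ‖v‖ := (norm_inner_le_norm v y).trans (mul_le_of_le_one_right (norm_nonneg v) hy)
  have hvv : ⟪v, v⟫_𝕜 = ⟪v - ⟪y, v⟫_𝕜 • y, a⟫_𝕜 - ⟪b, x⟫_𝕜 * ⟪v, y⟫_𝕜 - ⟪y, x⟫_𝕜 * ⟪v, b⟫_𝕜 := by
    nth_rw 2 [hv]
    rw [inner_sub_right, inner_sub_right, inner_smul_right, inner_smul_right, inner_sub_left,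
      inner_smul_left, inner_conj_symm]
    ring
  have hsq : ‖v‖ ^ 2 ≤ ‖v - ⟪y, v⟫_𝕜 • y‖ * ‖a‖ + (T + ‖v‖) * ‖b‖ := by
    have hbx : ‖⟪b, x⟫_𝕜‖ ≤ ‖b‖ :=
      (norm_inner_le_norm b x).trans (mul_le_of_le_one_right (norm_nonneg b) hx)
    have hyx : ‖⟪y, x⟫_𝕜‖ ≤ 1 :=
      (norm_inner_le_norm y x).trans (mul_le_one₀ hy (norm_nonneg x) hx)
    calc ‖v‖ ^ 2 = ‖⟪v, v⟫_𝕜‖ := by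
          rw [inner_self_eq_norm_sq_to_K, norm_pow, RCLike.norm_ofReal, abs_norm]
      _ ≤ ‖⟪v - ⟪y, v⟫_𝕜 • y, a⟫_𝕜‖ + ‖⟪b, x⟫_𝕜‖ * T + ‖⟪y, x⟫_𝕜‖ * ‖⟪v, b⟫_𝕜‖ := by
          rw [hvv, ← norm_mul, ← norm_mul]
          exact (norm_sub_le _ _).trans (add_le_add_left (norm_sub_le _ _) _)
      _ ≤ ‖v - ⟪y, v⟫_𝕜 • y‖ * ‖a‖ + ‖b‖ * T + 1 * (‖v‖ * ‖b‖) := by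
          gcongr
          · exact norm_inner_le_norm _ _
          · exact norm_inner_le_norm _ _
      _ = _ := by ring
  refine le_mul_sqrt_sq_add_sq_of_sq_le (norm_nonneg v) zero_le_two ?_ hsq
  have hP := norm_sub_inner_smul_sq_le (𝕜 := 𝕜) hy v
  rw [norm_inner_symm] at hP
  nlinarith [norm_nonneg v, norm_nonneg ⟪v, y⟫_𝕜]

variable [NormedSpace ℝ E] [IsScalarTower ℝ 𝕜 E]

lemma HasDerivAt.gramSchmidtStep {u w : ℝ → E} {a b : E} {τ : ℝ} (hu : HasDerivAt u a τ)
    (hw : HasDerivAt w b τ) :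
    HasDerivAt (fun s => gramSchmidtStep 𝕜 (u s) (w s))
      (a - (⟪w τ, a⟫_𝕜 + ⟪b, u τ⟫_𝕜) • w τ - ⟪w τ, u τ⟫_𝕜 • b) τ :=
  (hu.sub ((hw.inner 𝕜 hu).smul hw)).congr_deriv (by abel)

lemma norm_gramSchmidtStep_sub_le {x₁ y₁ x₂ y₂ : E} (hx₁ : ‖x₁‖ ≤ 1) (hy₁ : ‖y₁‖ ≤ 1)
    (hx₂ : ‖x₂‖ ≤ 1) (hy₂ : ‖y₂‖ ≤ 1) :
    ‖gramSchmidtStep 𝕜 x₁ y₁ - gramSchmidtStep 𝕜 x₂ y₂‖ ≤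
      2 * Real.sqrt (‖x₁ - x₂‖ ^ 2 + ‖y₁ - y₂‖ ^ 2) := by
  have hline (p q : E) (τ : ℝ) : HasDerivAt (fun s : ℝ => q + s • (p - q)) (p - q) τ := by
    simpa using ((hasDerivAt_id τ).smul_const (p - q)).const_add q
  have hball {p q : E} (hp : ‖p‖ ≤ 1) (hq : ‖q‖ ≤ 1) {τ : ℝ} (hτ : τ ∈ Icc (0 : ℝ) 1) :
      ‖q + τ • (p - q)‖ ≤ 1 := by
    simpa using (convex_closedBall (0 : E) 1).add_smul_sub_mem
      (by simpa using hq) (by simpa using hp) hτ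
  simpa using norm_image_sub_le_of_norm_deriv_le_segment_01'
    (fun τ _ => ((hline x₁ x₂ τ).gramSchmidtStep (𝕜 := 𝕜) (hline y₁ y₂ τ)).hasDerivWithinAt)
    (fun τ hτ => norm_gramSchmidtStep_deriv_le (hball hx₁ hx₂ (Ico_subset_Icc_self hτ))
      (hball hy₁ hy₂ (Ico_subset_Icc_self hτ)) _ _)

end InnerProduct

/-- The Gram–Schmidt map `t(x,y) = x − ⟨y,x⟩y` is 2-Lipschitz on the
product of closed unit balls of `ℂⁿ`. -/
theorem gram_schmidt_map_two_lipschitz (n : ℕ)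
    (t : EuclideanSpace ℂ (Fin n) → EuclideanSpace ℂ (Fin n) → EuclideanSpace ℂ (Fin n))
    (ht : t = fun x y => x - (inner ℂ y x : ℂ) • y)
    (x₁ y₁ x₂ y₂ : EuclideanSpace ℂ (Fin n))
    (hx₁ : ‖x₁‖ ≤ 1) (hy₁ : ‖y₁‖ ≤ 1) (hx₂ : ‖x₂‖ ≤ 1) (hy₂ : ‖y₂‖ ≤ 1) :
    ‖t x₁ y₁ - t x₂ y₂‖ ≤ 2 * Real.sqrt (‖x₁ - x₂‖ ^ 2 + ‖y₁ - y₂‖ ^ 2) := by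
  subst ht
  exact norm_gramSchmidtStep_sub_le hx₁ hy₁ hx₂ hy₂
end

section
/- Let U be a Haar-distributed unitary matrix in U(n), with (conjugate-transposed) rows u₁,…,uₙ ∈ ℂⁿ and u_{i1} the first coordinate of uᵢ. Let ψₙ := n(n+1)·E[min(|v₁|, 3/√(n+1))⁴] for v uniform on the unit sphere of ℂⁿ. Define the random vector x := Σ_{i=1}^n ( 2(n+1)·min(|u_{i1}|, 3/√(n+1))² − (2ψₙ − 1) )·conj(u_{i1})·uᵢ ∈ ℂⁿ. Then E[‖x‖₂²] ≤ 24·(n+1)/(n+2) + 1 − 4ψₙ²; in particular, if ψₙ ≥ 1/2 then E[‖x‖₂²] ≤ 24. -/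
/-!
Write `tᵢ = |U_{i0}|²`, `qᵢ = min(tᵢ, 9/(n+1))` and `c = 2ψ - 1`. Orthonormality of the rows gives
`‖x‖² = Σᵢ (2(n+1)qᵢ - c)² tᵢ`, and since `0 ≤ qᵢ ≤ tᵢ` and `c ≥ 0` this is at most
`4(n+1)² Σᵢ tᵢ³ - 4(n+1)c Σᵢ qᵢ² + c²`, whose expectation is
`24(n+1)/(n+2) - 4cψ + c² = 24(n+1)/(n+2) + 1 - 4ψ²` once `E[t³] = 6/(n(n+1)(n+2))` is known.

The moments of the first column need only left invariance of the Haar measure: every unit vector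
`a` is a row of some unitary matrix, so `⟨a, U e₀⟩` has the law of `U₀₀`. Averaging
`|z U_{i0} + U_{j0}|^{2k}` over the fourth roots of unity `z` kills the cross terms and yields
`E[tᵢtⱼ] = E[t²]/2` and `E[tᵢ²tⱼ + tⱼ²tᵢ] = 2E[t³]/3` for `i ≠ j`; together with `Σᵢ tᵢ = 1` these
give `E[t²] = 2/(n(n+1))` and `E[t³]`. Finally `c ≥ 0`, because `min(t, τ)² ≥ t² - t³/τ` forces
`ψ ≥ 4/3`.
-/

open MeasureTheory Matrix Finset

noncomputable instance {n : ℕ} : MeasurableSpace (Matrix.unitaryGroup (Fin n) ℂ) := borel _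
instance {n : ℕ} : BorelSpace (Matrix.unitaryGroup (Fin n) ℂ) := ⟨rfl⟩

/-- Entry of a unitary matrix. -/
def entry {n : ℕ} (U : Matrix.unitaryGroup (Fin n) ℂ) (i j : Fin n) : ℂ :=
  (U : Matrix (Fin n) (Fin n) ℂ) i j

/-- `‖x‖₂²` for `x := Σᵢ (2(n+1)·min(|u_{i1}|, 3/√(n+1))² − (2ψ − 1))·conj(u_{i1})·uᵢ`,
where `uᵢ` is the conjugate-transposed `i`-th row of `U` (so `uᵢ(j) = conj(U i j)` and
`u_{i1} = conj(U i 0)`). -/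
noncomputable def normSqX {n : ℕ} (hn : 0 < n) (ψ : ℝ)
    (U : Matrix.unitaryGroup (Fin n) ℂ) : ℝ :=
  ∑ j : Fin n, ‖∑ i : Fin n,
    ((2 * ((n : ℝ) + 1) *
        (min ‖entry U i ⟨0, hn⟩‖ (3 / Real.sqrt ((n : ℝ) + 1))) ^ 2 -
      (2 * ψ - 1) : ℝ) : ℂ) *
      entry U i ⟨0, hn⟩ * starRingEnd ℂ (entry U i j)‖ ^ 2

open Complex

instance Matrix.UnitaryGroup.compactSpace {ι 𝕜 : Type*} [Fintype ι] [DecidableEq ι] [RCLike 𝕜] :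
    CompactSpace (unitaryGroup ι 𝕜) := by
  refine isCompact_iff_compactSpace.mp ((isCompact_univ_pi fun _ => isCompact_univ_pi fun _ =>
    isCompact_closedBall (0 : 𝕜) 1).of_isClosed_subset ?_ fun U hU => ?_)
  · rw [show (unitaryGroup ι 𝕜 : Set (Matrix ι ι 𝕜)) = {U | star U * U = 1} from
      Set.ext fun _ => mem_unitaryGroup_iff']
    exact isClosed_eq (by fun_prop) continuous_const
  · simpa using entry_norm_bound_of_unitary hU

lemma Matrix.exists_mem_unitaryGroup_row_eq_star {ι 𝕜 : Type*} [Fintype ι] [DecidableEq ι]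
    [RCLike 𝕜] {a : EuclideanSpace 𝕜 ι} (ha : ‖a‖ = 1) (i : ι) :
    ∃ W ∈ unitaryGroup ι 𝕜, ∀ k, W i k = star (a k) := by
  have hv : Orthonormal 𝕜 (({i} : Set ι).domRestrict fun _ => a) := by
    rw [orthonormal_subsingleton_iff]; simp [ha]
  obtain ⟨b, hb⟩ := hv.exists_orthonormalBasis_extension_of_card_eq (by simp)
  refine ⟨star ((EuclideanSpace.basisFun ι 𝕜).toBasis.toMatrix b.toBasis),
    Unitary.star_mem ((EuclideanSpace.basisFun ι 𝕜).toMatrix_orthonormalBasis_mem_unitary b),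
    fun k => ?_⟩
  simp [star_apply, Module.Basis.toMatrix_apply, hb i rfl]

lemma Matrix.sum_normSq_sum_mul_star_of_mem_unitaryGroup {ι : Type*} [Fintype ι] [DecidableEq ι]
    {U : Matrix ι ι ℂ} (hU : U ∈ unitaryGroup ι ℂ) (a : ι → ℂ) :
    ∑ j, normSq (∑ i, a i * star (U i j)) = ∑ i, normSq (a i) := by
  have key : star (Uᴴ *ᵥ a) ⬝ᵥ (Uᴴ *ᵥ a) = star a ⬝ᵥ a := by
    rw [star_mulVec, conjTranspose_conjTranspose, dotProduct_mulVec, vecMul_vecMul,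
      ← star_eq_conjTranspose, mem_unitaryGroup_iff.mp hU, vecMul_one]
  apply ofReal_injective
  simp only [ofReal_sum, ← mul_conj]
  convert key using 1 <;> simp [dotProduct, mulVec, mul_comm]

lemma Complex.sum_normSq_I_pow_mul_add_sq (a b : ℂ) :
    ∑ m ∈ range 4, normSq (I ^ m * a + b) ^ 2 =
      4 * normSq a ^ 2 + 4 * normSq b ^ 2 + 16 * (normSq a * normSq b) := by
  simp only [sum_range_succ, sum_range_zero, pow_succ, pow_zero, one_mul, I_mul_I, normSq_apply,
    add_re, add_im, mul_re, mul_im, neg_re, neg_im, I_re, I_im, one_re, one_im]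
  ring

lemma Complex.sum_normSq_I_pow_mul_add_cube (a b : ℂ) :
    ∑ m ∈ range 4, normSq (I ^ m * a + b) ^ 3 = 4 * normSq a ^ 3 + 4 * normSq b ^ 3 +
      36 * (normSq a ^ 2 * normSq b) + 36 * (normSq b ^ 2 * normSq a) := by
  simp only [sum_range_succ, sum_range_zero, pow_succ, pow_zero, one_mul, I_mul_I, normSq_apply,
    add_re, add_im, mul_re, mul_im, neg_re, neg_im, I_re, I_im, one_re, one_im]
  ring

lemma Complex.sq_min_norm (z : ℂ) {c : ℝ} (hc : 0 ≤ c) :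
    min ‖z‖ c ^ 2 = min (normSq z) (c ^ 2) := by
  rw [← Complex.sq_norm]
  rcases le_total ‖z‖ c with h | h
  · rw [min_eq_left h, min_eq_left (pow_le_pow_left₀ (norm_nonneg z) h 2)]
  · rw [min_eq_right h, min_eq_right (pow_le_pow_left₀ hc h 2)]

lemma Complex.sq_min_norm_three_div_sqrt (z : ℂ) {x : ℝ} (hx : 0 ≤ x) :
    min ‖z‖ (3 / √x) ^ 2 = min (normSq z) (9 / x) := by
  rw [sq_min_norm z (by positivity), div_pow, Real.sq_sqrt hx]
  norm_num

lemma Fintype.sum_ite_eq_mul_add {ι : Type*} [Fintype ι] [DecidableEq ι] (i : ι) (a b : ℝ) :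
    ∑ j, (if i = j then a else b) = Fintype.card ι * b + (a - b) := by
  rw [← Finset.sum_congr rfl fun j _ => show b + (if i = j then a - b else 0) = _ by
    split_ifs <;> ring]
  simp [Finset.sum_add_distrib]

lemma sq_sub_pow_three_div_le_min_sq {t τ : ℝ} (ht : 0 ≤ t) (hτ : 0 < τ) :
    t ^ 2 - t ^ 3 / τ ≤ min t τ ^ 2 := by
  rcases le_total t τ with h | h
  · rw [min_eq_left h]
    have : 0 ≤ t ^ 3 / τ := by positivity
    linarith
  · rw [min_eq_right h, sub_le_iff_le_add, ← sub_le_iff_le_add', le_div_iff₀ hτ]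
    nlinarith [mul_nonneg (sq_nonneg t) (sub_nonneg.2 h)]

lemma sq_mul_sub_mul_le_of_le {a c q t : ℝ} (ha : 0 ≤ a) (hc : 0 ≤ c) (hq : 0 ≤ q) (hqt : q ≤ t) :
    (a * q - c) ^ 2 * t ≤ a ^ 2 * t ^ 3 - 2 * a * c * q ^ 2 + c ^ 2 * t := by
  have hq2 : q ^ 2 * t ≤ t ^ 3 := by nlinarith [mul_le_mul hqt hqt hq (hq.trans hqt)]
  have hqt2 : q ^ 2 ≤ q * t := by nlinarith
  nlinarith [mul_le_mul_of_nonneg_left hq2 (sq_nonneg a),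
    mul_le_mul_of_nonneg_left hqt2 (mul_nonneg ha hc)]

section HaarColumn

variable {n : ℕ}

@[fun_prop]
lemma continuous_entry (i j : Fin n) : Continuous fun U : unitaryGroup (Fin n) ℂ => entry U i j :=
  (continuous_apply_apply i j).comp continuous_subtype_val

lemma sum_normSq_entry (U : unitaryGroup (Fin n) ℂ) (l : Fin n) :
    ∑ i, normSq (entry U i l) = 1 := by
  simpa [entry, Pi.single_apply] using sum_normSq_sum_mul_star_of_mem_unitaryGroup
    (Unitary.star_mem U.2) (Pi.single l 1)

lemma normSqX_eq (hn : 0 < n) (ψ : ℝ) (U : unitaryGroup (Fin n) ℂ) :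
    normSqX hn ψ U = ∑ i, (2 * ((n : ℝ) + 1) * min (normSq (entry U i ⟨0, hn⟩)) (9 / ((n : ℝ) + 1))
      - (2 * ψ - 1)) ^ 2 * normSq (entry U i ⟨0, hn⟩) := by
  simp only [normSqX, Complex.sq_norm,
    sq_min_norm_three_div_sqrt _ (by positivity : (0 : ℝ) ≤ n + 1)]
  refine (sum_normSq_sum_mul_star_of_mem_unitaryGroup U.2 _).trans (sum_congr rfl fun i _ => ?_)
  rw [normSq_mul, normSq_ofReal, sq]

lemma normSqX_le (hn : 0 < n) {ψ : ℝ} (hψ : 1 / 2 ≤ ψ) (U : unitaryGroup (Fin n) ℂ) :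
    normSqX hn ψ U ≤ 4 * ((n : ℝ) + 1) ^ 2 * ∑ i, normSq (entry U i ⟨0, hn⟩) ^ 3 -
      4 * ((n : ℝ) + 1) * (2 * ψ - 1) *
        ∑ i, min (normSq (entry U i ⟨0, hn⟩)) (9 / ((n : ℝ) + 1)) ^ 2 + (2 * ψ - 1) ^ 2 := by
  rw [normSqX_eq]
  calc _ ≤ ∑ i, ((2 * ((n : ℝ) + 1)) ^ 2 * normSq (entry U i ⟨0, hn⟩) ^ 3 -
        2 * (2 * ((n : ℝ) + 1)) * (2 * ψ - 1) *
          min (normSq (entry U i ⟨0, hn⟩)) (9 / ((n : ℝ) + 1)) ^ 2 +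
        (2 * ψ - 1) ^ 2 * normSq (entry U i ⟨0, hn⟩)) :=
        sum_le_sum fun i _ => sq_mul_sub_mul_le_of_le (by positivity) (by linarith)
          (le_min (normSq_nonneg _) (by positivity)) (min_le_left _ _)
    _ = _ := by
        simp only [sum_add_distrib, sum_sub_distrib, ← mul_sum, sum_normSq_entry]
        ring

variable (μ : Measure (unitaryGroup (Fin n) ℂ)) [μ.IsHaarMeasure]

lemma integrable_of_continuous {f : unitaryGroup (Fin n) ℂ → ℝ} (hf : Continuous f) :
    Integrable f μ :=
  hf.integrable_of_hasCompactSupport (.of_compactSpace f)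

lemma integral_comp_inner_entry {a : EuclideanSpace ℂ (Fin n)} (ha : ‖a‖ = 1) (i l : Fin n)
    (G : ℂ → ℝ) : ∫ U, G (∑ k, star (a k) * entry U k l) ∂μ = ∫ U, G (entry U i l) ∂μ := by
  obtain ⟨W, hW, hWa⟩ := exists_mem_unitaryGroup_row_eq_star ha i
  rw [← integral_mul_left_eq_self (fun U => G (entry U i l)) ⟨W, hW⟩]
  simp [entry, Matrix.mul_apply, hWa]

lemma integral_comp_entry_eq (i i' l : Fin n) (G : ℂ → ℝ) :
    ∫ U, G (entry U i' l) ∂μ = ∫ U, G (entry U i l) ∂μ := by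
  simpa [PiLp.single_apply] using
    integral_comp_inner_entry μ (a := EuclideanSpace.single i' 1) (by simp) i l G

lemma integral_comp_mul_add_mul_entry {i j : Fin n} (hij : i ≠ j) {α β : ℂ}
    (h : normSq α + normSq β = 1) (l : Fin n) (G : ℂ → ℝ) :
    ∫ U, G (α * entry U i l + β * entry U j l) ∂μ = ∫ U, G (entry U i l) ∂μ := by
  have ha : ‖EuclideanSpace.single i (star α) + EuclideanSpace.single j (star β)‖ = 1 := by
    have := norm_add_sq_eq_norm_sq_add_norm_sq_of_inner_eq_zero (𝕜 := ℂ)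
      (EuclideanSpace.single i (star α)) (EuclideanSpace.single j (star β))
      (by simp [EuclideanSpace.inner_single_left, hij.symm])
    rw [← sq, ← sq, ← sq, PiLp.norm_single, PiLp.norm_single, norm_star, norm_star,
      Complex.sq_norm, Complex.sq_norm, h] at this
    exact (pow_eq_one_iff_of_nonneg (norm_nonneg _) two_ne_zero).mp this
  rw [← integral_comp_inner_entry μ ha i l G]
  congr with U
  simp only [PiLp.add_apply, PiLp.single_apply, star_add, add_mul, Finset.sum_add_distrib]
  simp [apply_ite, ite_mul]

lemma integral_normSq_mul_add_entry_pow {i j : Fin n} (hij : i ≠ j) {z : ℂ} (hz : ‖z‖ = 1)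
    (l : Fin n) (k : ℕ) :
    ∫ U, normSq (z * entry U i l + entry U j l) ^ k ∂μ =
      2 ^ k * ∫ U, normSq (entry U i l) ^ k ∂μ := by
  set s : ℂ := (((√2)⁻¹ : ℝ) : ℂ)
  have hs : normSq s = 2⁻¹ := by simp [s, normSq_ofReal]
  have h := integral_comp_mul_add_mul_entry μ hij (α := s * z) (β := s)
    (by rw [normSq_mul, hs, normSq_eq_norm_sq, hz]; norm_num) l fun w => (2 * normSq w) ^ k
  simp only [mul_pow] at h
  rw [← integral_const_mul, ← h]
  congr with U
  rw [mul_assoc, ← mul_add, normSq_mul, hs, ← mul_pow, ← mul_assoc]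
  norm_num

lemma integral_normSq_entry_mul {i j : Fin n} (hij : i ≠ j) (l : Fin n) :
    ∫ U, normSq (entry U i l) * normSq (entry U j l) ∂μ =
      (∫ U, normSq (entry U i l) ^ 2 ∂μ) / 2 := by
  have h : ∫ U, ∑ m ∈ range 4, normSq (I ^ m * entry U i l + entry U j l) ^ 2 ∂μ =
      16 * ∫ U, normSq (entry U i l) ^ 2 ∂μ := by
    rw [integral_finsetSum _ fun m _ => integrable_of_continuous μ (by fun_prop)]
    simp only [norm_pow, norm_I, one_pow, integral_normSq_mul_add_entry_pow μ hij, sum_const,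
      card_range, nsmul_eq_mul]
    ring
  simp_rw [sum_normSq_I_pow_mul_add_sq] at h
  simp (disch := exact integrable_of_continuous μ (by fun_prop)) only
    [integral_add, integral_const_mul] at h
  rw [integral_comp_entry_eq μ i j l fun w => normSq w ^ 2] at h
  linarith

lemma integral_normSq_entry_sq_mul_add {i j : Fin n} (hij : i ≠ j) (l : Fin n) :
    ∫ U, normSq (entry U i l) ^ 2 * normSq (entry U j l) ∂μ +
      ∫ U, normSq (entry U j l) ^ 2 * normSq (entry U i l) ∂μ =
      2 / 3 * ∫ U, normSq (entry U i l) ^ 3 ∂μ := by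
  have h : ∫ U, ∑ m ∈ range 4, normSq (I ^ m * entry U i l + entry U j l) ^ 3 ∂μ =
      32 * ∫ U, normSq (entry U i l) ^ 3 ∂μ := by
    rw [integral_finsetSum _ fun m _ => integrable_of_continuous μ (by fun_prop)]
    simp only [norm_pow, norm_I, one_pow, integral_normSq_mul_add_entry_pow μ hij, sum_const,
      card_range, nsmul_eq_mul]
    ring
  simp_rw [sum_normSq_I_pow_mul_add_cube] at h
  simp (disch := exact integrable_of_continuous μ (by fun_prop)) only
    [integral_add, integral_const_mul] at h
  rw [integral_comp_entry_eq μ i j l fun w => normSq w ^ 3] at h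
  linarith

lemma integral_sum_comp_entry (i l : Fin n) {G : ℂ → ℝ} (hG : Continuous G) :
    ∫ U, ∑ k, G (entry U k l) ∂μ = n * ∫ U, G (entry U i l) ∂μ := by
  rw [integral_finsetSum _ fun _ _ => integrable_of_continuous μ (by fun_prop)]
  simp [integral_comp_entry_eq μ i _ l G]

variable [IsProbabilityMeasure μ]

lemma integral_normSq_entry_sq (i l : Fin n) :
    ∫ U, normSq (entry U i l) ^ 2 ∂μ = 2 / (n * (n + 1)) := by
  set E := ∫ U, normSq (entry U i l) ^ 2 ∂μ
  have hpair : ∀ j k : Fin n,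
      ∫ U, normSq (entry U j l) * normSq (entry U k l) ∂μ = if j = k then E else E / 2 := by
    intro j k
    split_ifs with hjk
    · subst hjk
      simpa [← sq] using integral_comp_entry_eq μ i j l fun w => normSq w ^ 2
    · rw [integral_normSq_entry_mul μ hjk, integral_comp_entry_eq μ i j l fun w => normSq w ^ 2]
  have h : ∫ U, (∑ j, normSq (entry U j l)) * (∑ k, normSq (entry U k l)) ∂μ = 1 := by
    simp [sum_normSq_entry]
  simp_rw [sum_mul_sum] at h
  simp (disch := intro _ _; exact integrable_of_continuous μ (by fun_prop)) only
    [integral_finsetSum] at h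
  simp only [hpair, Fintype.sum_ite_eq_mul_add, sum_const, card_univ, Fintype.card_fin,
    nsmul_eq_mul] at h
  have hn : (0 : ℝ) < n := by exact_mod_cast i.pos
  field_simp
  nlinarith

lemma integral_normSq_entry_cube (i l : Fin n) :
    ∫ U, normSq (entry U i l) ^ 3 ∂μ = 6 / (n * (n + 1) * (n + 2)) := by
  set E := ∫ U, normSq (entry U i l) ^ 3 ∂μ
  set X : Fin n → Fin n → ℝ := fun j k => ∫ U, normSq (entry U j l) ^ 2 * normSq (entry U k l) ∂μ
  have hsym : ∀ j k, X j k + X k j = if j = k then 2 * E else 2 / 3 * E := by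
    intro j k
    split_ifs with hjk
    · subst hjk
      have := integral_comp_entry_eq μ i j l fun w => normSq w ^ 3
      simp only [X, ← pow_succ] at this ⊢
      linarith
    · rw [integral_normSq_entry_sq_mul_add μ hjk,
        integral_comp_entry_eq μ i j l fun w => normSq w ^ 3]
  have hX : ∑ j, ∑ k, X j k = n * ∫ U, normSq (entry U i l) ^ 2 ∂μ := by
    have h : ∫ U, ∑ j, normSq (entry U j l) ^ 2 * (∑ k, normSq (entry U k l)) ∂μ =
        ∑ j, ∫ U, normSq (entry U j l) ^ 2 ∂μ := by
      simp_rw [sum_normSq_entry, mul_one]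
      exact integral_finsetSum _ fun _ _ => integrable_of_continuous μ (by fun_prop)
    simp_rw [mul_sum] at h
    simp (disch := intro _ _; exact integrable_of_continuous μ (by fun_prop)) only
      [integral_finsetSum] at h
    simp [X, h, integral_comp_entry_eq μ i _ l fun w => normSq w ^ 2]
  have h2X : 2 * ∑ j, ∑ k, X j k = ∑ j, ∑ k, (X j k + X k j) := by
    rw [two_mul]
    nth_rewrite 2 [sum_comm]
    simp only [sum_add_distrib]
  simp only [hsym, Fintype.sum_ite_eq_mul_add, sum_const, card_univ, Fintype.card_fin,
    nsmul_eq_mul, hX, integral_normSq_entry_sq] at h2X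
  have hn : (0 : ℝ) < n := by exact_mod_cast i.pos
  field_simp at h2X ⊢
  nlinarith

lemma integral_min_normSq_entry_sq_ge (i l : Fin n) {τ : ℝ} (hτ : 0 < τ) :
    2 / (n * (n + 1)) - 6 / (n * (n + 1) * (n + 2)) / τ ≤
      ∫ U, min (normSq (entry U i l)) τ ^ 2 ∂μ := by
  rw [← integral_normSq_entry_sq μ i l, ← integral_normSq_entry_cube μ i l, ← integral_div,
    ← integral_sub (integrable_of_continuous μ (by fun_prop))
      (integrable_of_continuous μ (by fun_prop))]
  exact integral_mono (integrable_of_continuous μ (by fun_prop))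
    (integrable_of_continuous μ (by fun_prop)) fun U => sq_sub_pow_three_div_le_min_sq
      (normSq_nonneg _) hτ

lemma four_div_three_le_mul_integral_min_normSq_entry_sq (i l : Fin n) :
    4 / 3 ≤ n * (n + 1) * ∫ U, min (normSq (entry U i l)) (9 / (n + 1)) ^ 2 ∂μ := by
  have hn : (0 : ℝ) < n := by exact_mod_cast i.pos
  have h := integral_min_normSq_entry_sq_ge μ i l (τ := 9 / (n + 1)) (by positivity)
  have key : (n : ℝ) * (n + 1) * (2 / (n * (n + 1)) - 6 / (n * (n + 1) * (n + 2)) / (9 / (n + 1))) =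
      2 - 2 * (n + 1) / (3 * (n + 2)) := by
    field_simp; ring
  have : 2 * (n + 1) / (3 * (n + 2)) ≤ (2 / 3 : ℝ) := by
    rw [div_le_iff₀ (by positivity)]; linarith
  nlinarith [mul_le_mul_of_nonneg_left h (by positivity : (0 : ℝ) ≤ n * (n + 1))]

lemma integral_normSqX_le (hn : 0 < n) {ψ : ℝ} (hψ : 1 / 2 ≤ ψ) :
    ∫ U, normSqX hn ψ U ∂μ ≤ 24 * ((n : ℝ) + 1) / (n + 2) - 4 * (2 * ψ - 1) *
      (n * (n + 1) * ∫ U, min (normSq (entry U ⟨0, hn⟩ ⟨0, hn⟩)) (9 / ((n : ℝ) + 1)) ^ 2 ∂μ) +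
      (2 * ψ - 1) ^ 2 := by
  refine (integral_mono (integrable_of_continuous μ (by unfold normSqX; fun_prop))
    (integrable_of_continuous μ (by fun_prop)) (normSqX_le hn hψ)).trans_eq ?_
  simp (disch := exact integrable_of_continuous μ (by fun_prop)) only
    [integral_add, integral_sub, integral_const_mul, integral_const]
  rw [integral_sum_comp_entry μ ⟨0, hn⟩ ⟨0, hn⟩ (G := fun z => normSq z ^ 3) (by fun_prop),
    integral_sum_comp_entry μ ⟨0, hn⟩ ⟨0, hn⟩ (G := fun z => min (normSq z) (9 / (n + 1)) ^ 2)
      (by fun_prop), integral_normSq_entry_cube, probReal_univ, one_smul]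
  have hn' : (0 : ℝ) < n := by exact_mod_cast hn
  field_simp
  ring

end HaarColumn

/-- With `ψₙ = n(n+1)·E[min(|v₁|,3/√(n+1))⁴]` for `v` uniform on the sphere,
and `x` the random vector built from the rows of a Haar unitary `U`,
`E[‖x‖₂²] ≤ 24(n+1)/(n+2) + 1 − 4ψₙ²`; in particular `E[‖x‖₂²] ≤ 24` when `ψₙ ≥ 1/2`. -/
theorem expected_norm_sq_certificate_term (n : ℕ) (hn : 0 < n)
    (μ : Measure (Matrix.unitaryGroup (Fin n) ℂ)) [μ.IsHaarMeasure] [IsProbabilityMeasure μ]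
    (ψ : ℝ)
    (hψ : ψ = (n : ℝ) * ((n : ℝ) + 1) *
      ∫ U, (min ‖entry U ⟨0, hn⟩ ⟨0, hn⟩‖ (3 / Real.sqrt ((n : ℝ) + 1))) ^ 4 ∂μ) :
    (∫ U, normSqX hn ψ U ∂μ ≤ 24 * ((n : ℝ) + 1) / ((n : ℝ) + 2) + 1 - 4 * ψ ^ 2) ∧
    (1 / 2 ≤ ψ → ∫ U, normSqX hn ψ U ∂μ ≤ 24) := by
  have hψQ : ψ = n * (n + 1) *
      ∫ U, min (normSq (entry U ⟨0, hn⟩ ⟨0, hn⟩)) (9 / ((n : ℝ) + 1)) ^ 2 ∂μ := by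
    simp only [hψ, pow_mul (min _ _) 2 2,
      sq_min_norm_three_div_sqrt _ (by positivity : (0 : ℝ) ≤ n + 1)]
  have hψ_ge : 4 / 3 ≤ ψ := hψQ ▸ four_div_three_le_mul_integral_min_normSq_entry_sq μ _ _
  have hbound := integral_normSqX_le μ hn (by linarith : 1 / 2 ≤ ψ)
  rw [← hψQ] at hbound
  refine ⟨by linarith, fun _ => ?_⟩
  have : 24 * ((n : ℝ) + 1) / (n + 2) ≤ 24 := by rw [div_le_iff₀ (by positivity)]; linarith
  nlinarith
end

section
/- Fix constants c₁ ≥ 1, 0 < c₂ ≤ 1, and λ ∈ [0,1]. Define ṽ₁(x) = x/max(‖x‖₂, √(n/c₁)), ṽ₂(x) = x/max(‖x‖₂, √c₂), t(x,y) = x − ⟨y,x⟩·y, and F̃ : ℂⁿ × ℂⁿ → ℝ by F̃(ζ, z) = Σ_{i=1}^n | |ṽ₁(z)_i|² − λ·|ṽ₂(t(ṽ₁(ζ), ṽ₁(z)))_i|² |. Then F̃ is Lipschitz with constant 20·√(c₁/c₂)/√n with respect to the Euclidean norm on ℂⁿ × ℂⁿ: |F̃(ζ₁,z₁) − F̃(ζ₂,z₂)|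 ≤ (20·√(c₁/c₂)/√n)·(‖ζ₁−ζ₂‖₂² + ‖z₁−z₂‖₂²)^{1/2} for all ζ₁,ζ₂,z₁,z₂ ∈ ℂⁿ. -/
/-!
`ṽ₁` and `ṽ₂` are rescaled nearest-point projections onto closed balls, so (as projections onto
convex sets) they are Lipschitz with constants `√(c₁/n)` and `1/√c₂`, and they take values in the
unit ball. On the unit ball `t` is `2`-Lipschitz in each variable, and for `u`, `w` in the unit ball
Cauchy–Schwarz gives `∑ᵢ | |uᵢ|² - |wᵢ|² | ≤ (‖u‖ + ‖w‖) ‖u - w‖ ≤ 2 ‖u - w‖`. Chaining these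
bounds through the triangle inequality gives the constant `2√(c₁/n) + 8√(c₁/(c₂ n))`, which is
at most `10 √(c₁/c₂) / √n`.
-/

open Finset

/-- `ṽ₁(x) = x / max(‖x‖₂, √(n/c₁))`. -/
noncomputable def v1 {n : ℕ} (c₁ : ℝ) (x : EuclideanSpace ℂ (Fin n)) :
    EuclideanSpace ℂ (Fin n) :=
  (max ‖x‖ (Real.sqrt ((n : ℝ) / c₁)))⁻¹ • x

/-- `ṽ₂(x) = x / max(‖x‖₂, √c₂)`. -/
noncomputable def v2 {n : ℕ} (c₂ : ℝ) (x : EuclideanSpace ℂ (Fin n)) :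
    EuclideanSpace ℂ (Fin n) :=
  (max ‖x‖ (Real.sqrt c₂))⁻¹ • x

/-- `t(x,y) = x − ⟨y,x⟩·y`. -/
noncomputable def tGS {n : ℕ} (x y : EuclideanSpace ℂ (Fin n)) : EuclideanSpace ℂ (Fin n) :=
  x - (inner ℂ y x : ℂ) • y

/-- `F̃(ζ,z) = Σᵢ ||ṽ₁(z)ᵢ|² − λ|ṽ₂(t(ṽ₁(ζ),ṽ₁(z)))ᵢ|²|`. -/
noncomputable def Ftil {n : ℕ} (c₁ c₂ lam : ℝ) (ζ z : EuclideanSpace ℂ (Fin n)) : ℝ :=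
  ∑ i, |‖v1 c₁ z i‖ ^ 2 -
    lam * ‖v2 c₂ (tGS (v1 c₁ ζ) (v1 c₁ z)) i‖ ^ 2|

noncomputable def radialClamp {E : Type*} [NormedAddCommGroup E] [NormedSpace ℝ E] (m : ℝ)
    (x : E) : E :=
  (max ‖x‖ m)⁻¹ • x

section RadialClamp

variable {E : Type*} [NormedAddCommGroup E]

lemma norm_radialClamp_le_one [NormedSpace ℝ E] {m : ℝ} (hm : 0 < m) (x : E) :
    ‖radialClamp m x‖ ≤ 1 := by
  have hpos : 0 < max ‖x‖ m := lt_max_of_lt_right hm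
  rw [radialClamp, norm_smul, Real.norm_of_nonneg (inv_nonneg.2 hpos.le)]
  exact inv_mul_le_one_of_le₀ (le_max_left _ _) hpos.le

variable [InnerProductSpace ℝ E]

open RealInnerProductSpace in
/-- `m • radialClamp m` is the nearest-point projection onto the closed ball of radius `m`,
so it satisfies the variational inequality of a projection onto a convex set. -/
lemma inner_sub_smul_radialClamp_nonpos {m : ℝ} (hm : 0 < m) (x : E) {b : E} (hb : ‖b‖ ≤ 1) :
    ⟪x - m • radialClamp m x, b - radialClamp m x⟫ ≤ 0 := by
  rcases le_total ‖x‖ m with hx | hx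
  · simp [radialClamp, max_eq_right hx, smul_smul, hm.ne']
  · have hx0 : 0 < ‖x‖ := hm.trans_le hx
    have hxb : ⟪x, b⟫ ≤ ‖x‖ := by
      simpa using (real_inner_le_norm x b).trans (mul_le_of_le_one_right hx0.le hb)
    have hsub : x - m • radialClamp m x = (1 - m / ‖x‖) • x := by
      simp only [radialClamp, max_eq_left hx, smul_smul, sub_smul, one_smul, div_eq_mul_inv]
    rw [hsub, real_inner_smul_left, radialClamp, max_eq_left hx, inner_sub_right,
      real_inner_smul_right, real_inner_self_eq_norm_sq]
    have : ‖x‖⁻¹ * ‖x‖ ^ 2 = ‖x‖ := by field_simp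
    rw [this]
    exact mul_nonpos_of_nonneg_of_nonpos (by rw [sub_nonneg, div_le_one hx0]; exact hx)
      (by linarith)

open RealInnerProductSpace in
lemma norm_radialClamp_sub_le {m : ℝ} (hm : 0 < m) (x y : E) :
    ‖radialClamp m x - radialClamp m y‖ ≤ m⁻¹ * ‖x - y‖ := by
  set p := radialClamp m x
  set q := radialClamp m y
  have hp := inner_sub_smul_radialClamp_nonpos hm x (norm_radialClamp_le_one hm y)
  have hq := inner_sub_smul_radialClamp_nonpos hm y (norm_radialClamp_le_one hm x)
  have key : m * ‖p - q‖ ^ 2 ≤ ⟪x - y, p - q⟫ := by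
    have e : ⟪x - y, p - q⟫ - m * ‖p - q‖ ^ 2 = - ⟪x - m • p, q - p⟫ - ⟪y - m • q, p - q⟫ := by
      rw [← real_inner_self_eq_norm_sq]
      simp only [inner_sub_left, inner_sub_right, real_inner_smul_left, real_inner_comm p q]
      ring
    linarith
  rw [le_inv_mul_iff₀ hm]
  rcases (norm_nonneg (p - q)).eq_or_lt with h | h
  · rw [← h, mul_zero]; exact norm_nonneg _
  · refine le_of_mul_le_mul_right ?_ h
    calc m * ‖p - q‖ * ‖p - q‖ = m * ‖p - q‖ ^ 2 := by ring
      _ ≤ ⟪x - y, p - q⟫ := key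
      _ ≤ ‖x - y‖ * ‖p - q‖ := real_inner_le_norm _ _

end RadialClamp

section Inner

variable {𝕜 E : Type*} [RCLike 𝕜] [NormedAddCommGroup E] [InnerProductSpace 𝕜 E]

open scoped InnerProductSpace

lemma norm_inner_smul_sub_inner_smul_le {x x' y y' : E} (hx' : ‖x'‖ ≤ 1) (hy : ‖y‖ ≤ 1)
    (hy' : ‖y'‖ ≤ 1) :
    ‖⟪y, x⟫_𝕜 • y - ⟪y', x'⟫_𝕜 • y'‖ ≤ ‖x - x'‖ + 2 * ‖y - y'‖ := by
  have hsplit : ⟪y, x⟫_𝕜 • y - ⟪y', x'⟫_𝕜 • y' =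
      ⟪y, x - x'⟫_𝕜 • y + ⟪y - y', x'⟫_𝕜 • y + ⟪y', x'⟫_𝕜 • (y - y') := by
    simp only [inner_sub_left, inner_sub_right]
    module
  have h₁ : ‖⟪y, x - x'⟫_𝕜 • y‖ ≤ ‖x - x'‖ := by
    rw [norm_smul]
    calc ‖⟪y, x - x'⟫_𝕜‖ * ‖y‖ ≤ ‖y‖ * ‖x - x'‖ * 1 := by
          gcongr
          exact norm_inner_le_norm _ _
      _ ≤ ‖x - x'‖ := by nlinarith [norm_nonneg (x - x')]
  have h₂ : ‖⟪y - y', x'⟫_𝕜 • y‖ ≤ ‖y - y'‖ := by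
    rw [norm_smul]
    calc ‖⟪y - y', x'⟫_𝕜‖ * ‖y‖ ≤ ‖y - y'‖ * ‖x'‖ * 1 := by
          gcongr
          exact norm_inner_le_norm _ _
      _ ≤ ‖y - y'‖ := by nlinarith [norm_nonneg (y - y')]
  have h₃ : ‖⟪y', x'⟫_𝕜 • (y - y')‖ ≤ ‖y - y'‖ := by
    rw [norm_smul]
    refine mul_le_of_le_one_left (norm_nonneg _) ?_
    exact (norm_inner_le_norm _ _).trans (mul_le_one₀ hy' (norm_nonneg _) hx')
  rw [hsplit]
  linarith [norm_add₃_le (a := ⟪y, x - x'⟫_𝕜 • y) (b := ⟪y - y', x'⟫_𝕜 • y)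
    (c := ⟪y', x'⟫_𝕜 • (y - y'))]

end Inner

section EuclideanSpace

variable {𝕜 ι : Type*} [RCLike 𝕜] [Fintype ι]

lemma EuclideanSpace.sum_norm_mul_norm_le (u w : EuclideanSpace 𝕜 ι) :
    ∑ i, ‖u i‖ * ‖w i‖ ≤ ‖u‖ * ‖w‖ := by
  simpa only [EuclideanSpace.norm_eq] using
    Real.sum_mul_le_sqrt_mul_sqrt univ (fun i ↦ ‖u i‖) (fun i ↦ ‖w i‖)

lemma EuclideanSpace.sum_abs_norm_sq_sub_norm_sq_le (u w : EuclideanSpace 𝕜 ι) :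
    ∑ i, |‖u i‖ ^ 2 - ‖w i‖ ^ 2| ≤ (‖u‖ + ‖w‖) * ‖u - w‖ := by
  have hterm (i : ι) : |‖u i‖ ^ 2 - ‖w i‖ ^ 2| ≤ ‖(u - w) i‖ * ‖u i‖ + ‖(u - w) i‖ * ‖w i‖ := by
    rw [sq_sub_sq, abs_mul, abs_of_nonneg (by positivity), PiLp.sub_apply]
    nlinarith [abs_norm_sub_norm_le (u i) (w i), norm_nonneg (u i), norm_nonneg (w i)]
  calc ∑ i, |‖u i‖ ^ 2 - ‖w i‖ ^ 2|
      ≤ ∑ i, ‖(u - w) i‖ * ‖u i‖ + ∑ i, ‖(u - w) i‖ * ‖w i‖ := by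
        rw [← sum_add_distrib]; exact sum_le_sum fun i _ ↦ hterm i
    _ ≤ ‖u - w‖ * ‖u‖ + ‖u - w‖ * ‖w‖ := by
        gcongr <;> exact EuclideanSpace.sum_norm_mul_norm_le _ _
    _ = (‖u‖ + ‖w‖) * ‖u - w‖ := by ring

end EuclideanSpace

lemma abs_sum_abs_sub_mul_sub_sum_abs_sub_mul_le {ι : Type*} (s : Finset ι) (a b a' b' : ι → ℝ)
    (c : ℝ) :
    |∑ i ∈ s, |a i - c * b i| - ∑ i ∈ s, (|a' i - c * b' i|)|
      ≤ ∑ i ∈ s, |a i - a' i| + |c| * ∑ i ∈ s, |b i - b' i| := by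
  rw [← sum_sub_distrib, mul_sum, ← sum_add_distrib]
  refine (abs_sum_le_sum_abs _ _).trans (sum_le_sum fun i _ ↦ ?_)
  calc |(|a i - c * b i| - |a' i - c * b' i|)|
      ≤ |(a i - a' i) - c * (b i - b' i)| := by
        rw [show (a i - a' i) - c * (b i - b' i) = (a i - c * b i) - (a' i - c * b' i) by ring]
        exact abs_abs_sub_abs_le_abs_sub _ _
    _ ≤ |a i - a' i| + |c| * |b i - b' i| := by
        rw [← abs_mul]; exact abs_sub _ _

lemma norm_tGS_sub_le {n : ℕ} {x x' y y' : EuclideanSpace ℂ (Fin n)} (hx' : ‖x'‖ ≤ 1)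
    (hy : ‖y‖ ≤ 1) (hy' : ‖y'‖ ≤ 1) :
    ‖tGS x y - tGS x' y'‖ ≤ 2 * ‖x - x'‖ + 2 * ‖y - y'‖ := by
  have hsplit : tGS x y - tGS x' y' =
      (x - x') - ((inner ℂ y x : ℂ) • y - (inner ℂ y' x' : ℂ) • y') := by
    simp only [tGS]; abel
  rw [hsplit]
  linarith [norm_sub_le (x - x') ((inner ℂ y x : ℂ) • y - (inner ℂ y' x' : ℂ) • y'),
    norm_inner_smul_sub_inner_smul_le (𝕜 := ℂ) (x := x) hx' hy hy']

lemma Ftil_sub_le {n : ℕ} (hn : 0 < n) {c₁ c₂ lam : ℝ} (hc₁ : 0 < c₁) (hc₂ : 0 < c₂)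
    (hlam : |lam| ≤ 1) (ζ₁ ζ₂ z₁ z₂ : EuclideanSpace ℂ (Fin n)) :
    |Ftil c₁ c₂ lam ζ₁ z₁ - Ftil c₁ c₂ lam ζ₂ z₂| ≤
      2 * (√(n / c₁))⁻¹ * ‖z₁ - z₂‖ +
        4 * ((√(n / c₁))⁻¹ * (√c₂)⁻¹) * (‖ζ₁ - ζ₂‖ + ‖z₁ - z₂‖) := by
  have hm₁ : 0 < √(n / c₁) := Real.sqrt_pos.2 (div_pos (Nat.cast_pos.2 hn) hc₁)
  have hm₂ : 0 < √c₂ := Real.sqrt_pos.2 hc₂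
  have hv₁ (x : EuclideanSpace ℂ (Fin n)) : ‖v1 c₁ x‖ ≤ 1 := norm_radialClamp_le_one hm₁ x
  have hv₂ (x : EuclideanSpace ℂ (Fin n)) : ‖v2 c₂ x‖ ≤ 1 := norm_radialClamp_le_one hm₂ x
  have hL₁ (x y : EuclideanSpace ℂ (Fin n)) : ‖v1 c₁ x - v1 c₁ y‖ ≤ (√(n / c₁))⁻¹ * ‖x - y‖ :=
    norm_radialClamp_sub_le hm₁ x y
  have hL₂ (x y : EuclideanSpace ℂ (Fin n)) : ‖v2 c₂ x - v2 c₂ y‖ ≤ (√c₂)⁻¹ * ‖x - y‖ :=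
    norm_radialClamp_sub_le hm₂ x y
  set T₁ := tGS (v1 c₁ ζ₁) (v1 c₁ z₁)
  set T₂ := tGS (v1 c₁ ζ₂) (v1 c₁ z₂)
  have hT : ‖T₁ - T₂‖ ≤ 2 * (√(n / c₁))⁻¹ * (‖ζ₁ - ζ₂‖ + ‖z₁ - z₂‖) := by
    linarith [norm_tGS_sub_le (x := v1 c₁ ζ₁) (hv₁ ζ₂) (hv₁ z₁) (hv₁ z₂), hL₁ ζ₁ ζ₂, hL₁ z₁ z₂]
  have hA : ∑ i, |‖v1 c₁ z₁ i‖ ^ 2 - ‖v1 c₁ z₂ i‖ ^ 2| ≤ 2 * (√(n / c₁))⁻¹ * ‖z₁ - z₂‖ := by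
    refine (EuclideanSpace.sum_abs_norm_sq_sub_norm_sq_le _ _).trans ?_
    nlinarith [hv₁ z₁, hv₁ z₂, hL₁ z₁ z₂, norm_nonneg (v1 c₁ z₁ - v1 c₁ z₂)]
  have hB : ∑ i, |‖v2 c₂ T₁ i‖ ^ 2 - ‖v2 c₂ T₂ i‖ ^ 2| ≤
      4 * ((√(n / c₁))⁻¹ * (√c₂)⁻¹) * (‖ζ₁ - ζ₂‖ + ‖z₁ - z₂‖) := by
    refine (EuclideanSpace.sum_abs_norm_sq_sub_norm_sq_le _ _).trans ?_
    have hL₂T := (hL₂ T₁ T₂).trans (mul_le_mul_of_nonneg_left hT (by positivity))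
    nlinarith [hv₂ T₁, hv₂ T₂, norm_nonneg (v2 c₂ T₁ - v2 c₂ T₂)]
  have hB₀ : 0 ≤ ∑ i, |‖v2 c₂ T₁ i‖ ^ 2 - ‖v2 c₂ T₂ i‖ ^ 2| := by positivity
  calc |Ftil c₁ c₂ lam ζ₁ z₁ - Ftil c₁ c₂ lam ζ₂ z₂|
      ≤ ∑ i, |‖v1 c₁ z₁ i‖ ^ 2 - ‖v1 c₁ z₂ i‖ ^ 2| +
          |lam| * ∑ i, |‖v2 c₂ T₁ i‖ ^ 2 - ‖v2 c₂ T₂ i‖ ^ 2| :=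
        abs_sum_abs_sub_mul_sub_sum_abs_sub_mul_le _ _ _ _ _ _
    _ ≤ _ := by linarith [mul_le_of_le_one_left hB₀ hlam]

/-- `F̃` is Lipschitz with constant `20·√(c₁/c₂)/√n` on `ℂⁿ × ℂⁿ`. -/
theorem Ftil_lipschitz (n : ℕ) (hn : 0 < n) (c₁ c₂ lam : ℝ)
    (hc₁ : 1 ≤ c₁) (hc₂0 : 0 < c₂) (hc₂1 : c₂ ≤ 1) (hlam : lam ∈ Set.Icc (0 : ℝ) 1)
    (ζ₁ ζ₂ z₁ z₂ : EuclideanSpace ℂ (Fin n)) :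
    |Ftil c₁ c₂ lam ζ₁ z₁ - Ftil c₁ c₂ lam ζ₂ z₂| ≤
      20 * Real.sqrt (c₁ / c₂) / Real.sqrt n *
        Real.sqrt (‖ζ₁ - ζ₂‖ ^ 2 + ‖z₁ - z₂‖ ^ 2) := by
  have hc₁0 : 0 < c₁ := one_pos.trans_le hc₁
  have hlam' : |lam| ≤ 1 := abs_le.2 ⟨by linarith [hlam.1], hlam.2⟩
  have hK : √(c₁ / c₂) / √n = (√(n / c₁))⁻¹ * (√c₂)⁻¹ := by
    rw [Real.sqrt_div hc₁0.le, Real.sqrt_div (Nat.cast_nonneg n)]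
    field_simp
  set L₁ := (√(n / c₁))⁻¹
  set K := L₁ * (√c₂)⁻¹
  have hL₁K : L₁ ≤ K := le_mul_of_one_le_right (by positivity)
    ((one_le_inv₀ (by positivity)).2 (Real.sqrt_le_one.2 hc₂1))
  set D := √(‖ζ₁ - ζ₂‖ ^ 2 + ‖z₁ - z₂‖ ^ 2)
  have hζ : ‖ζ₁ - ζ₂‖ ≤ D := Real.le_sqrt_of_sq_le (by nlinarith)
  have hz : ‖z₁ - z₂‖ ≤ D := Real.le_sqrt_of_sq_le (by nlinarith)
  have hKD : 0 ≤ K * D := by positivity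
  rw [mul_div_assoc, hK]
  calc |Ftil c₁ c₂ lam ζ₁ z₁ - Ftil c₁ c₂ lam ζ₂ z₂|
      ≤ 2 * L₁ * ‖z₁ - z₂‖ + 4 * K * (‖ζ₁ - ζ₂‖ + ‖z₁ - z₂‖) := Ftil_sub_le hn hc₁0 hc₂0 hlam' ..
    _ ≤ 2 * K * D + 4 * K * (D + D) := by gcongr
    _ ≤ 20 * K * D := by linarith
end
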